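/- Let α be the canonical 6×3 coefficient matrix with rows e₁, e₂, e₃, e₁+e₂, e₂+e₃, e₁+e₂+e₃, let O be its associated optimization map, and index the entries of a constraint matrix m by the six linear forms x₁, x₂, x₃, x₁+x₂, x₂+x₃, x₁+x₂+x₃. Let m = O(m) be an optimized constraint matrix whose polytope P^α_m is nonempty, contained in (0,1)³, and satisfies σ₄₃₂₁(P^α_m) = P^α_m, where σ₄₃₂₁(x) = (1−x₃, 1−x₂, 1−x₁). Then m̲₁ + m̄₃ = m̄₁ + m̲₃ = m̲₂ + m̄₂ = 1, m̲_{1+2} + m̄_{2+3} = m̄_{1+2} + m̲_{2+3} = 2, and m̲_{1+2+3} + m̄_{1+2+3} = 3. -/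

import Mathlib

open Set

/-- A constraint matrix: a pair of vectors of lower and upper bounds in `ℝ^e`. -/
abbrev CM (e : ℕ) := (Fin e → ℝ) × (Fin e → ℝ)

/-- The open polytope `P^α_m` associated with a coefficient matrix `α` and a
constraint matrix `m`. -/
def PolySet {e d : ℕ} (α : Matrix (Fin e) (Fin d) ℝ) (m : CM e) : Set (Fin d → ℝ) :=
  {x | ∀ i, m.1 i < α.mulVec x i ∧ α.mulVec x i < m.2 i}

/-- A coefficient matrix is non-degenerate if its rows are nonzero and
pairwise non-proportional. -/
def Nondeg {e d : ℕ} (α : Matrix (Fin e) (Fin d) ℝ) : Prop :=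
  (∀ i, α i ≠ 0) ∧ ∀ i j : Fin e, i ≠ j → ∀ c : ℝ, α i ≠ c • α j

/-- The set `Λ_i`: vectors `λ ∈ ℝ^e` supported on some `S` with `|S| ≤ d` which are
the unique solution of `λᵀ α = α_i` with support in `S`. -/
def Lambda {e d : ℕ} (α : Matrix (Fin e) (Fin d) ℝ) (i : Fin e) : Set (Fin e → ℝ) :=
  {l | ∃ S : Finset (Fin e), S.card ≤ d ∧ (∀ k ∉ S, l k = 0) ∧
        (∀ j, ∑ k, l k * α k j = α i j) ∧
        ∀ l' : Fin e → ℝ, (∀ k ∉ S, l' k = 0) → (∀ j, ∑ k, l' k * α k j = α i j) → l' = l}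

/-- `e̲_k(a,m)` -/
noncomputable def eLow {e : ℕ} (a : ℝ) (m : CM e) (k : Fin e) : ℝ :=
  if 0 ≤ a then m.1 k else m.2 k

/-- `ē_k(a,m)` -/
noncomputable def eHigh {e : ℕ} (a : ℝ) (m : CM e) (k : Fin e) : ℝ :=
  if 0 ≤ a then m.2 k else m.1 k

/-- The optimized constraint matrix `O(m)`. -/
noncomputable def Opt {e d : ℕ} (α : Matrix (Fin e) (Fin d) ℝ) (m : CM e) : CM e :=
  (fun i => sSup ((fun l : Fin e → ℝ => ∑ k, l k * eLow (l k) m k) '' Lambda α i),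
   fun i => sInf ((fun l : Fin e → ℝ => ∑ k, l k * eHigh (l k) m k) '' Lambda α i))

/-- Intersection constraint matrix `m ∩ m'`. -/
def interCM {e : ℕ} (m m' : CM e) : CM e :=
  (fun i => max (m.1 i) (m'.1 i), fun i => min (m.2 i) (m'.2 i))

/-- Constraint-matrix inclusion `m ⊂ m'`. -/
def cmSub {e : ℕ} (m m' : CM e) : Prop := ∀ i, m'.1 i ≤ m.1 i ∧ m.2 i ≤ m'.2 i

/-- The map `h`. -/
noncomputable def hfun (u : ℝ) : ℝ :=
  if Int.fract (u + 1/2) = 0 then (0:ℝ) else ((⌊u + 1/2⌋ : ℤ) : ℝ)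

/-- The open unit cube `(0,1)³`. -/
def cube3 : Set (Fin 3 → ℝ) := {x | ∀ i, 0 < x i ∧ x i < 1}

/-- The map `G_{3,ε}`. -/
noncomputable def G3 (ε : ℝ) (x : Fin 3 → ℝ) : Fin 3 → ℝ :=
  ![2*(1-ε)*x 0 + 2*ε*((2*hfun (x 0) - hfun (x 1) + hfun (x 0 + x 1) - hfun (x 1 + x 2)
      + hfun (x 0 + x 1 + x 2))/4) - hfun (x 0),
    2*(1-ε)*x 1 + 2*ε*((2*hfun (x 1) - hfun (x 0) - hfun (x 2) + hfun (x 0 + x 1)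
      + hfun (x 1 + x 2))/4) - hfun (x 1),
    2*(1-ε)*x 2 + 2*ε*((2*hfun (x 2) - hfun (x 1) - hfun (x 0 + x 1) + hfun (x 1 + x 2)
      + hfun (x 0 + x 1 + x 2))/4) - hfun (x 2)]

/-- The atom `A_ω` with label `ω = (h(x₁),h(x₂),h(x₃),h(x₁+x₂),h(x₂+x₃),h(x₁+x₂+x₃))`. -/
noncomputable def Atom3 (ω : Fin 6 → ℤ) : Set (Fin 3 → ℝ) :=
  {x | x ∈ cube3 ∧ hfun (x 0) = (ω 0 : ℝ) ∧ hfun (x 1) = (ω 1 : ℝ) ∧ hfun (x 2) = (ω 2 : ℝ) ∧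
       hfun (x 0 + x 1) = (ω 3 : ℝ) ∧ hfun (x 1 + x 2) = (ω 4 : ℝ) ∧
       hfun (x 0 + x 1 + x 2) = (ω 5 : ℝ)}

/-- Componentwise fractional part. -/
noncomputable def frv (v : Fin 3 → ℝ) : Fin 3 → ℝ := fun i => Int.fract (v i)

noncomputable def sigma4231 (x : Fin 3 → ℝ) : Fin 3 → ℝ := frv ![-(x 1) - x 2, x 1, -(x 0) - x 1]
noncomputable def sigma1324 (x : Fin 3 → ℝ) : Fin 3 → ℝ := frv ![x 0 + x 1, -(x 1), x 1 + x 2]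
noncomputable def sigma4321 (x : Fin 3 → ℝ) : Fin 3 → ℝ := frv ![-(x 2), -(x 1), -(x 0)]
noncomputable def sigma2134 (x : Fin 3 → ℝ) : Fin 3 → ℝ := frv ![-(x 0), x 0 + x 1, x 2]
noncomputable def sigma3124 (x : Fin 3 → ℝ) : Fin 3 → ℝ := frv ![-(x 0) - x 1, x 0, x 1 + x 2]

/-- The symmetry `Σ(x) = (1-x₁, 1-x₂, 1-x₃)`. -/
def Sig3 (x : Fin 3 → ℝ) : Fin 3 → ℝ := fun i => 1 - x i

/-- The canonical 6×3 coefficient matrix with rows `e₁,e₂,e₃,e₁+e₂,e₂+e₃,e₁+e₂+e₃`. -/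
def alpha6 : Matrix (Fin 6) (Fin 3) ℝ := !![1,0,0; 0,1,0; 0,0,1; 1,1,0; 0,1,1; 1,1,1]

/-- The affine symmetry `σ₄₃₂₁(x) = (1-x₃, 1-x₂, 1-x₁)`. -/
def sigma4321aff (x : Fin 3 → ℝ) : Fin 3 → ℝ := ![1 - x 2, 1 - x 1, 1 - x 0]

/-!
Every linear form of this system is a difference `p_b - p_a` of the prefix sums
`p = (0, x₁, x₁ + x₂, x₁ + x₂ + x₃)`, and elements of `Λ_i` rewrite the `i`-th form along each
path of two or three edges between the same endpoints. So `m = O(m)` bounds each `m̲_i`,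
`m̄_i` by every such path, which are exactly the inequalities making Fourier–Motzkin elimination
of the two remaining coordinates succeed: each form maps the nonempty polytope onto the whole
interval `(m̲_i, m̄_i)`. Since `σ₄₃₂₁` turns `x₁, x₂, x₁ + x₂, x₁ + x₂ + x₃` into
`1 - x₃, 1 - x₂, 2 - (x₂ + x₃), 3 - (x₁ + x₂ + x₃)` and preserves the polytope, comparing the
endpoints of these intervals gives the identities.
-/

open Matrix

section Optimization

variable {e d : ℕ} {α : Matrix (Fin e) (Fin d) ℝ} {m : CM e} {i : Fin e} {l : Fin e → ℝ}

theorem vecMul_eq_of_mem_Lambda (hl : l ∈ Lambda α i) : l ᵥ* α = α i := by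
  obtain ⟨_, _, _, hsol, _⟩ := hl
  exact funext hsol

theorem sum_mul_mulVec_of_mem_Lambda (hl : l ∈ Lambda α i) (x : Fin d → ℝ) :
    ∑ k, l k * (α *ᵥ x) k = (α *ᵥ x) i := by
  change l ⬝ᵥ (α *ᵥ x) = α i ⬝ᵥ x
  rw [dotProduct_mulVec, vecMul_eq_of_mem_Lambda hl]

theorem sum_mul_eLow_le_mulVec {x : Fin d → ℝ} (hx : x ∈ PolySet α m) (hl : l ∈ Lambda α i) :
    ∑ k, l k * eLow (l k) m k ≤ (α *ᵥ x) i := by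
  rw [← sum_mul_mulVec_of_mem_Lambda hl x]
  refine Finset.sum_le_sum fun k _ => ?_
  unfold eLow
  split_ifs with h
  · exact mul_le_mul_of_nonneg_left (hx k).1.le h
  · exact mul_le_mul_of_nonpos_left (hx k).2.le (not_le.1 h).le

theorem mulVec_le_sum_mul_eHigh {x : Fin d → ℝ} (hx : x ∈ PolySet α m) (hl : l ∈ Lambda α i) :
    (α *ᵥ x) i ≤ ∑ k, l k * eHigh (l k) m k := by
  rw [← sum_mul_mulVec_of_mem_Lambda hl x]
  refine Finset.sum_le_sum fun k _ => ?_
  unfold eHigh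
  split_ifs with h
  · exact mul_le_mul_of_nonneg_left (hx k).2.le h
  · exact mul_le_mul_of_nonpos_left (hx k).1.le (not_le.1 h).le

theorem bounds_of_mem_Lambda_of_eq_Opt (hopt : m = Opt α m) (hne : (PolySet α m).Nonempty)
    (hl : l ∈ Lambda α i) :
    ∑ k, l k * eLow (l k) m k ≤ m.1 i ∧ m.2 i ≤ ∑ k, l k * eHigh (l k) m k := by
  obtain ⟨x, hx⟩ := hne
  constructor
  · calc ∑ k, l k * eLow (l k) m k ≤ (Opt α m).1 i :=
          le_csSup ⟨(α *ᵥ x) i, forall_mem_image.2 fun _ hl' => sum_mul_eLow_le_mulVec hx hl'⟩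
            ⟨l, hl, rfl⟩
      _ = m.1 i := by rw [← hopt]
  · calc m.2 i = (Opt α m).2 i := by rw [← hopt]
      _ ≤ ∑ k, l k * eHigh (l k) m k :=
          csInf_le ⟨(α *ᵥ x) i, forall_mem_image.2 fun _ hl' => mulVec_le_sum_mul_eHigh hx hl'⟩
            ⟨l, hl, rfl⟩

theorem mem_Lambda_of_det_ne_zero (b : Fin d → Fin e) (hdet : (α.submatrix b id).det ≠ 0)
    (hsupp : ∀ k ∉ range b, l k = 0) (hsol : l ᵥ* α = α i) : l ∈ Lambda α i := by
  have hb : Function.Injective b := fun j j' hjj' => by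
    by_contra hne
    exact hdet (det_zero_of_row_eq hne (funext fun _ => by simp [hjj']))
  have hS : ∀ k, k ∉ Finset.univ.image b ↔ k ∉ range b := by simp
  refine ⟨Finset.univ.image b, Finset.card_image_le.trans (by simp),
    fun k hk => hsupp k ((hS k).1 hk), fun j => congrFun hsol j, fun l' hsupp' hsol' => ?_⟩
  have hdiff : ∀ k ∉ range b, (l' - l) k = 0 := fun k hk => by
    simp [hsupp k hk, hsupp' k ((hS k).2 hk)]
  have hker : (fun j => (l' - l) (b j)) ᵥ* α.submatrix b id = 0 := by
    have hl' : l' ᵥ* α = α i := funext hsol'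
    ext c
    have hzero : ((l' - l) ᵥ* α) c = 0 := by simp [sub_vecMul, hl', hsol]
    rw [Pi.zero_apply, ← hzero]
    exact Fintype.sum_of_injective b hb _ _ (fun k hk => by simp [hdiff k hk]) fun _ => rfl
  have hzero := eq_zero_of_vecMul_eq_zero hdet hker
  funext k
  by_cases hk : k ∈ range b
  · obtain ⟨j, rfl⟩ := hk
    simpa [sub_eq_zero] using congrFun hzero j
  · simpa [sub_eq_zero] using hdiff k hk

end Optimization

theorem mulVec_alpha6 (x : Fin 3 → ℝ) :
    alpha6 *ᵥ x = ![x 0, x 1, x 2, x 0 + x 1, x 1 + x 2, x 0 + x 1 + x 2] := by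
  ext i; fin_cases i <;> simp [alpha6, mulVec, dotProduct, Fin.sum_univ_three]

theorem mem_polySet_alpha6 {m : CM 6} {x : Fin 3 → ℝ} :
    x ∈ PolySet alpha6 m ↔
      (m.1 0 < x 0 ∧ x 0 < m.2 0) ∧ (m.1 1 < x 1 ∧ x 1 < m.2 1) ∧ (m.1 2 < x 2 ∧ x 2 < m.2 2) ∧
      (m.1 3 < x 0 + x 1 ∧ x 0 + x 1 < m.2 3) ∧ (m.1 4 < x 1 + x 2 ∧ x 1 + x 2 < m.2 4) ∧
      (m.1 5 < x 0 + x 1 + x 2 ∧ x 0 + x 1 + x 2 < m.2 5) := by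
  simp [PolySet, mulVec_alpha6, Fin.forall_fin_succ]

section LambdaAlpha6

attribute [local simp] alpha6 det_succ_row_zero Fin.sum_univ_succ Fin.forall_fin_succ funext_iff
  vecMul submatrix

theorem mem_Lambda_alpha6_zero :
    ![0, -1, 0, 1, 0, 0] ∈ Lambda alpha6 0 ∧ ![0, 0, 1, 1, -1, 0] ∈ Lambda alpha6 0 ∧
      ![0, -1, -1, 0, 0, 1] ∈ Lambda alpha6 0 ∧ ![0, 0, 0, 0, -1, 1] ∈ Lambda alpha6 0 :=
  ⟨mem_Lambda_of_det_ne_zero ![1, 3, 2] (by simp) (by simp) (by simp),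
    mem_Lambda_of_det_ne_zero ![2, 3, 4] (by simp) (by simp) (by simp),
    mem_Lambda_of_det_ne_zero ![1, 2, 5] (by simp) (by simp) (by simp),
    mem_Lambda_of_det_ne_zero ![4, 5, 2] (by simp) (by simp) (by simp)⟩

theorem mem_Lambda_alpha6_one :
    ![0, 0, -1, 0, 1, 0] ∈ Lambda alpha6 1 ∧ ![-1, 0, 0, 1, 0, 0] ∈ Lambda alpha6 1 ∧
      ![-1, 0, -1, 0, 0, 1] ∈ Lambda alpha6 1 ∧ ![0, 0, 0, 1, 1, -1] ∈ Lambda alpha6 1 :=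
  ⟨mem_Lambda_of_det_ne_zero ![2, 4, 0] (by simp) (by simp) (by simp),
    mem_Lambda_of_det_ne_zero ![0, 3, 2] (by simp) (by simp) (by simp),
    mem_Lambda_of_det_ne_zero ![0, 2, 5] (by simp) (by simp) (by simp),
    mem_Lambda_of_det_ne_zero ![3, 4, 5] (by simp) (by simp) (by simp)⟩

theorem mem_Lambda_alpha6_two :
    ![0, -1, 0, 0, 1, 0] ∈ Lambda alpha6 2 ∧ ![0, 0, 0, -1, 0, 1] ∈ Lambda alpha6 2 ∧
      ![-1, -1, 0, 0, 0, 1] ∈ Lambda alpha6 2 ∧ ![1, 0, 0, -1, 1, 0] ∈ Lambda alpha6 2 :=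
  ⟨mem_Lambda_of_det_ne_zero ![1, 4, 0] (by simp) (by simp) (by simp),
    mem_Lambda_of_det_ne_zero ![3, 5, 0] (by simp) (by simp) (by simp),
    mem_Lambda_of_det_ne_zero ![0, 1, 5] (by simp) (by simp) (by simp),
    mem_Lambda_of_det_ne_zero ![0, 3, 4] (by simp) (by simp) (by simp)⟩

theorem mem_Lambda_alpha6_three :
    ![0, 0, -1, 0, 0, 1] ∈ Lambda alpha6 3 ∧ ![1, 1, 0, 0, 0, 0] ∈ Lambda alpha6 3 ∧
      ![1, 0, -1, 0, 1, 0] ∈ Lambda alpha6 3 ∧ ![0, 1, 0, 0, -1, 1] ∈ Lambda alpha6 3 :=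
  ⟨mem_Lambda_of_det_ne_zero ![2, 5, 0] (by simp) (by simp) (by simp),
    mem_Lambda_of_det_ne_zero ![0, 1, 2] (by simp) (by simp) (by simp),
    mem_Lambda_of_det_ne_zero ![0, 2, 4] (by simp) (by simp) (by simp),
    mem_Lambda_of_det_ne_zero ![1, 4, 5] (by simp) (by simp) (by simp)⟩

theorem mem_Lambda_alpha6_four :
    ![-1, 0, 0, 0, 0, 1] ∈ Lambda alpha6 4 ∧ ![0, 1, 1, 0, 0, 0] ∈ Lambda alpha6 4 ∧
      ![-1, 0, 1, 1, 0, 0] ∈ Lambda alpha6 4 ∧ ![0, 1, 0, -1, 0, 1] ∈ Lambda alpha6 4 :=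
  ⟨mem_Lambda_of_det_ne_zero ![0, 5, 2] (by simp) (by simp) (by simp),
    mem_Lambda_of_det_ne_zero ![1, 2, 0] (by simp) (by simp) (by simp),
    mem_Lambda_of_det_ne_zero ![0, 2, 3] (by simp) (by simp) (by simp),
    mem_Lambda_of_det_ne_zero ![1, 3, 5] (by simp) (by simp) (by simp)⟩

theorem mem_Lambda_alpha6_five :
    ![0, 0, 1, 1, 0, 0] ∈ Lambda alpha6 5 ∧ ![1, 0, 0, 0, 1, 0] ∈ Lambda alpha6 5 ∧
      ![1, 1, 1, 0, 0, 0] ∈ Lambda alpha6 5 ∧ ![0, -1, 0, 1, 1, 0] ∈ Lambda alpha6 5 :=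
  ⟨mem_Lambda_of_det_ne_zero ![2, 3, 0] (by simp) (by simp) (by simp),
    mem_Lambda_of_det_ne_zero ![0, 4, 2] (by simp) (by simp) (by simp),
    mem_Lambda_of_det_ne_zero ![0, 1, 2] (by simp) (by simp) (by simp),
    mem_Lambda_of_det_ne_zero ![1, 3, 4] (by simp) (by simp) (by simp)⟩

end LambdaAlpha6

-- Fourier–Motzkin elimination: the bounds on `u` are the constraints left on it once `v` is
-- eliminated, and the inequalities supplied by `Λ_i` put each lower bound below each upper one.

theorem Ioo_subset_image_alpha6_zero {m : CM 6} (hopt : m = Opt alpha6 m)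
    (hne : (PolySet alpha6 m).Nonempty) :
    Ioo (m.1 0) (m.2 0) ⊆ (fun x => x 0) '' PolySet alpha6 m := by
  rintro t ⟨ht, ht'⟩
  obtain ⟨Λ₁, Λ₂, Λ₃, Λ₄⟩ := mem_Lambda_alpha6_zero
  obtain ⟨h₁, h₁'⟩ := bounds_of_mem_Lambda_of_eq_Opt hopt hne Λ₁
  obtain ⟨h₂, h₂'⟩ := bounds_of_mem_Lambda_of_eq_Opt hopt hne Λ₂
  obtain ⟨h₃, h₃'⟩ := bounds_of_mem_Lambda_of_eq_Opt hopt hne Λ₃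
  obtain ⟨h₄, h₄'⟩ := bounds_of_mem_Lambda_of_eq_Opt hopt hne Λ₄
  simp only [Fin.sum_univ_six, Matrix.cons_val, eLow, eHigh] at h₁ h₁' h₂ h₂' h₃ h₃' h₄ h₄'
  norm_num at h₁ h₁' h₂ h₂' h₃ h₃' h₄ h₄'
  obtain ⟨y, hy⟩ := hne
  obtain ⟨⟨hy₀, hy₀'⟩, ⟨hy₁, hy₁'⟩, ⟨hy₂, hy₂'⟩, ⟨hy₃, hy₃'⟩, ⟨hy₄, hy₄'⟩, ⟨hy₅, hy₅'⟩⟩ :=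
    mem_polySet_alpha6.1 hy
  obtain ⟨u, hu, hu'⟩ := Finset.exists_between'
    {m.1 1, m.1 3 - t, m.1 4 - m.2 2, m.1 5 - t - m.2 2}
    {m.2 1, m.2 3 - t, m.2 4 - m.1 2, m.2 5 - t - m.1 2}
    (by simp only [Finset.mem_insert, Finset.mem_singleton]
        rintro _ (rfl | rfl | rfl | rfl) _ (rfl | rfl | rfl | rfl) <;> linarith)
  simp only [Finset.mem_insert, Finset.mem_singleton, forall_eq_or_imp, forall_eq] at hu hu'
  obtain ⟨v, hv, hv'⟩ := Finset.exists_between'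
    {m.1 2, m.1 4 - u, m.1 5 - t - u} {m.2 2, m.2 4 - u, m.2 5 - t - u}
    (by simp only [Finset.mem_insert, Finset.mem_singleton]
        rintro _ (rfl | rfl | rfl) _ (rfl | rfl | rfl) <;> linarith)
  simp only [Finset.mem_insert, Finset.mem_singleton, forall_eq_or_imp, forall_eq] at hv hv'
  refine ⟨![t, u, v], mem_polySet_alpha6.2 ?_, by simp⟩
  simp only [Matrix.cons_val]
  refine ⟨⟨?_, ?_⟩, ⟨?_, ?_⟩, ⟨?_, ?_⟩, ⟨?_, ?_⟩, ⟨?_, ?_⟩, ⟨?_, ?_⟩⟩ <;> linarith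

theorem Ioo_subset_image_alpha6_one {m : CM 6} (hopt : m = Opt alpha6 m)
    (hne : (PolySet alpha6 m).Nonempty) :
    Ioo (m.1 1) (m.2 1) ⊆ (fun x => x 1) '' PolySet alpha6 m := by
  rintro t ⟨ht, ht'⟩
  obtain ⟨Λ₁, Λ₂, Λ₃, Λ₄⟩ := mem_Lambda_alpha6_one
  obtain ⟨h₁, h₁'⟩ := bounds_of_mem_Lambda_of_eq_Opt hopt hne Λ₁
  obtain ⟨h₂, h₂'⟩ := bounds_of_mem_Lambda_of_eq_Opt hopt hne Λ₂
  obtain ⟨h₃, h₃'⟩ := bounds_of_mem_Lambda_of_eq_Opt hopt hne Λ₃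
  obtain ⟨h₄, h₄'⟩ := bounds_of_mem_Lambda_of_eq_Opt hopt hne Λ₄
  simp only [Fin.sum_univ_six, Matrix.cons_val, eLow, eHigh] at h₁ h₁' h₂ h₂' h₃ h₃' h₄ h₄'
  norm_num at h₁ h₁' h₂ h₂' h₃ h₃' h₄ h₄'
  obtain ⟨y, hy⟩ := hne
  obtain ⟨⟨hy₀, hy₀'⟩, ⟨hy₁, hy₁'⟩, ⟨hy₂, hy₂'⟩, ⟨hy₃, hy₃'⟩, ⟨hy₄, hy₄'⟩, ⟨hy₅, hy₅'⟩⟩ :=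
    mem_polySet_alpha6.1 hy
  obtain ⟨u, hu, hu'⟩ := Finset.exists_between'
    {m.1 0, m.1 3 - t, m.1 5 - t - m.2 2, m.1 5 - m.2 4}
    {m.2 0, m.2 3 - t, m.2 5 - t - m.1 2, m.2 5 - m.1 4}
    (by simp only [Finset.mem_insert, Finset.mem_singleton]
        rintro _ (rfl | rfl | rfl | rfl) _ (rfl | rfl | rfl | rfl) <;> linarith)
  simp only [Finset.mem_insert, Finset.mem_singleton, forall_eq_or_imp, forall_eq] at hu hu'
  obtain ⟨v, hv, hv'⟩ := Finset.exists_between'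
    {m.1 2, m.1 4 - t, m.1 5 - u - t} {m.2 2, m.2 4 - t, m.2 5 - u - t}
    (by simp only [Finset.mem_insert, Finset.mem_singleton]
        rintro _ (rfl | rfl | rfl) _ (rfl | rfl | rfl) <;> linarith)
  simp only [Finset.mem_insert, Finset.mem_singleton, forall_eq_or_imp, forall_eq] at hv hv'
  refine ⟨![u, t, v], mem_polySet_alpha6.2 ?_, by simp⟩
  simp only [Matrix.cons_val]
  refine ⟨⟨?_, ?_⟩, ⟨?_, ?_⟩, ⟨?_, ?_⟩, ⟨?_, ?_⟩, ⟨?_, ?_⟩, ⟨?_, ?_⟩⟩ <;> linarith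

theorem Ioo_subset_image_alpha6_two {m : CM 6} (hopt : m = Opt alpha6 m)
    (hne : (PolySet alpha6 m).Nonempty) :
    Ioo (m.1 2) (m.2 2) ⊆ (fun x => x 2) '' PolySet alpha6 m := by
  rintro t ⟨ht, ht'⟩
  obtain ⟨Λ₁, Λ₂, Λ₃, Λ₄⟩ := mem_Lambda_alpha6_two
  obtain ⟨h₁, h₁'⟩ := bounds_of_mem_Lambda_of_eq_Opt hopt hne Λ₁
  obtain ⟨h₂, h₂'⟩ := bounds_of_mem_Lambda_of_eq_Opt hopt hne Λ₂
  obtain ⟨h₃, h₃'⟩ := bounds_of_mem_Lambda_of_eq_Opt hopt hne Λ₃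
  obtain ⟨h₄, h₄'⟩ := bounds_of_mem_Lambda_of_eq_Opt hopt hne Λ₄
  simp only [Fin.sum_univ_six, Matrix.cons_val, eLow, eHigh] at h₁ h₁' h₂ h₂' h₃ h₃' h₄ h₄'
  norm_num at h₁ h₁' h₂ h₂' h₃ h₃' h₄ h₄'
  obtain ⟨y, hy⟩ := hne
  obtain ⟨⟨hy₀, hy₀'⟩, ⟨hy₁, hy₁'⟩, ⟨hy₂, hy₂'⟩, ⟨hy₃, hy₃'⟩, ⟨hy₄, hy₄'⟩, ⟨hy₅, hy₅'⟩⟩ :=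
    mem_polySet_alpha6.1 hy
  obtain ⟨u, hu, hu'⟩ := Finset.exists_between'
    {m.1 1, m.1 4 - t, m.1 3 - m.2 0, m.1 5 - t - m.2 0}
    {m.2 1, m.2 4 - t, m.2 3 - m.1 0, m.2 5 - t - m.1 0}
    (by simp only [Finset.mem_insert, Finset.mem_singleton]
        rintro _ (rfl | rfl | rfl | rfl) _ (rfl | rfl | rfl | rfl) <;> linarith)
  simp only [Finset.mem_insert, Finset.mem_singleton, forall_eq_or_imp, forall_eq] at hu hu'
  obtain ⟨v, hv, hv'⟩ := Finset.exists_between'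
    {m.1 0, m.1 3 - u, m.1 5 - u - t} {m.2 0, m.2 3 - u, m.2 5 - u - t}
    (by simp only [Finset.mem_insert, Finset.mem_singleton]
        rintro _ (rfl | rfl | rfl) _ (rfl | rfl | rfl) <;> linarith)
  simp only [Finset.mem_insert, Finset.mem_singleton, forall_eq_or_imp, forall_eq] at hv hv'
  refine ⟨![v, u, t], mem_polySet_alpha6.2 ?_, by simp⟩
  simp only [Matrix.cons_val]
  refine ⟨⟨?_, ?_⟩, ⟨?_, ?_⟩, ⟨?_, ?_⟩, ⟨?_, ?_⟩, ⟨?_, ?_⟩, ⟨?_, ?_⟩⟩ <;> linarith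

theorem Ioo_subset_image_alpha6_three {m : CM 6} (hopt : m = Opt alpha6 m)
    (hne : (PolySet alpha6 m).Nonempty) :
    Ioo (m.1 3) (m.2 3) ⊆ (fun x => x 0 + x 1) '' PolySet alpha6 m := by
  rintro t ⟨ht, ht'⟩
  obtain ⟨Λ₁, Λ₂, Λ₃, Λ₄⟩ := mem_Lambda_alpha6_three
  obtain ⟨h₁, h₁'⟩ := bounds_of_mem_Lambda_of_eq_Opt hopt hne Λ₁
  obtain ⟨h₂, h₂'⟩ := bounds_of_mem_Lambda_of_eq_Opt hopt hne Λ₂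
  obtain ⟨h₃, h₃'⟩ := bounds_of_mem_Lambda_of_eq_Opt hopt hne Λ₃
  obtain ⟨h₄, h₄'⟩ := bounds_of_mem_Lambda_of_eq_Opt hopt hne Λ₄
  simp only [Fin.sum_univ_six, Matrix.cons_val, eLow, eHigh] at h₁ h₁' h₂ h₂' h₃ h₃' h₄ h₄'
  norm_num at h₁ h₁' h₂ h₂' h₃ h₃' h₄ h₄'
  obtain ⟨y, hy⟩ := hne
  obtain ⟨⟨hy₀, hy₀'⟩, ⟨hy₁, hy₁'⟩, ⟨hy₂, hy₂'⟩, ⟨hy₃, hy₃'⟩, ⟨hy₄, hy₄'⟩, ⟨hy₅, hy₅'⟩⟩ :=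
    mem_polySet_alpha6.1 hy
  obtain ⟨u, hu, hu'⟩ := Finset.exists_between'
    {m.1 0, t - m.2 1, m.1 2 - m.2 4 + t, m.1 5 - m.2 4}
    {m.2 0, t - m.1 1, m.2 2 - m.1 4 + t, m.2 5 - m.1 4}
    (by simp only [Finset.mem_insert, Finset.mem_singleton]
        rintro _ (rfl | rfl | rfl | rfl) _ (rfl | rfl | rfl | rfl) <;> linarith)
  simp only [Finset.mem_insert, Finset.mem_singleton, forall_eq_or_imp, forall_eq] at hu hu'
  obtain ⟨v, hv, hv'⟩ := Finset.exists_between'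
    {m.1 2, m.1 4 - t + u, m.1 5 - t} {m.2 2, m.2 4 - t + u, m.2 5 - t}
    (by simp only [Finset.mem_insert, Finset.mem_singleton]
        rintro _ (rfl | rfl | rfl) _ (rfl | rfl | rfl) <;> linarith)
  simp only [Finset.mem_insert, Finset.mem_singleton, forall_eq_or_imp, forall_eq] at hv hv'
  refine ⟨![u, t - u, v], mem_polySet_alpha6.2 ?_, by simp⟩
  simp only [Matrix.cons_val]
  refine ⟨⟨?_, ?_⟩, ⟨?_, ?_⟩, ⟨?_, ?_⟩, ⟨?_, ?_⟩, ⟨?_, ?_⟩, ⟨?_, ?_⟩⟩ <;> linarith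

theorem Ioo_subset_image_alpha6_four {m : CM 6} (hopt : m = Opt alpha6 m)
    (hne : (PolySet alpha6 m).Nonempty) :
    Ioo (m.1 4) (m.2 4) ⊆ (fun x => x 1 + x 2) '' PolySet alpha6 m := by
  rintro t ⟨ht, ht'⟩
  obtain ⟨Λ₁, Λ₂, Λ₃, Λ₄⟩ := mem_Lambda_alpha6_four
  obtain ⟨h₁, h₁'⟩ := bounds_of_mem_Lambda_of_eq_Opt hopt hne Λ₁
  obtain ⟨h₂, h₂'⟩ := bounds_of_mem_Lambda_of_eq_Opt hopt hne Λ₂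
  obtain ⟨h₃, h₃'⟩ := bounds_of_mem_Lambda_of_eq_Opt hopt hne Λ₃
  obtain ⟨h₄, h₄'⟩ := bounds_of_mem_Lambda_of_eq_Opt hopt hne Λ₄
  simp only [Fin.sum_univ_six, Matrix.cons_val, eLow, eHigh] at h₁ h₁' h₂ h₂' h₃ h₃' h₄ h₄'
  norm_num at h₁ h₁' h₂ h₂' h₃ h₃' h₄ h₄'
  obtain ⟨y, hy⟩ := hne
  obtain ⟨⟨hy₀, hy₀'⟩, ⟨hy₁, hy₁'⟩, ⟨hy₂, hy₂'⟩, ⟨hy₃, hy₃'⟩, ⟨hy₄, hy₄'⟩, ⟨hy₅, hy₅'⟩⟩ :=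
    mem_polySet_alpha6.1 hy
  obtain ⟨u, hu, hu'⟩ := Finset.exists_between'
    {m.1 2, t - m.2 1, m.1 0 - m.2 3 + t, m.1 5 - m.2 3}
    {m.2 2, t - m.1 1, m.2 0 - m.1 3 + t, m.2 5 - m.1 3}
    (by simp only [Finset.mem_insert, Finset.mem_singleton]
        rintro _ (rfl | rfl | rfl | rfl) _ (rfl | rfl | rfl | rfl) <;> linarith)
  simp only [Finset.mem_insert, Finset.mem_singleton, forall_eq_or_imp, forall_eq] at hu hu'
  obtain ⟨v, hv, hv'⟩ := Finset.exists_between'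
    {m.1 0, m.1 3 - t + u, m.1 5 - t} {m.2 0, m.2 3 - t + u, m.2 5 - t}
    (by simp only [Finset.mem_insert, Finset.mem_singleton]
        rintro _ (rfl | rfl | rfl) _ (rfl | rfl | rfl) <;> linarith)
  simp only [Finset.mem_insert, Finset.mem_singleton, forall_eq_or_imp, forall_eq] at hv hv'
  refine ⟨![v, t - u, u], mem_polySet_alpha6.2 ?_, by simp⟩
  simp only [Matrix.cons_val]
  refine ⟨⟨?_, ?_⟩, ⟨?_, ?_⟩, ⟨?_, ?_⟩, ⟨?_, ?_⟩, ⟨?_, ?_⟩, ⟨?_, ?_⟩⟩ <;> linarith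

theorem Ioo_subset_image_alpha6_five {m : CM 6} (hopt : m = Opt alpha6 m)
    (hne : (PolySet alpha6 m).Nonempty) :
    Ioo (m.1 5) (m.2 5) ⊆ (fun x => x 0 + x 1 + x 2) '' PolySet alpha6 m := by
  rintro t ⟨ht, ht'⟩
  obtain ⟨Λ₁, Λ₂, Λ₃, Λ₄⟩ := mem_Lambda_alpha6_five
  obtain ⟨h₁, h₁'⟩ := bounds_of_mem_Lambda_of_eq_Opt hopt hne Λ₁
  obtain ⟨h₂, h₂'⟩ := bounds_of_mem_Lambda_of_eq_Opt hopt hne Λ₂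
  obtain ⟨h₃, h₃'⟩ := bounds_of_mem_Lambda_of_eq_Opt hopt hne Λ₃
  obtain ⟨h₄, h₄'⟩ := bounds_of_mem_Lambda_of_eq_Opt hopt hne Λ₄
  simp only [Fin.sum_univ_six, Matrix.cons_val, eLow, eHigh] at h₁ h₁' h₂ h₂' h₃ h₃' h₄ h₄'
  norm_num at h₁ h₁' h₂ h₂' h₃ h₃' h₄ h₄'
  obtain ⟨y, hy⟩ := hne
  obtain ⟨⟨hy₀, hy₀'⟩, ⟨hy₁, hy₁'⟩, ⟨hy₂, hy₂'⟩, ⟨hy₃, hy₃'⟩, ⟨hy₄, hy₄'⟩, ⟨hy₅, hy₅'⟩⟩ :=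
    mem_polySet_alpha6.1 hy
  obtain ⟨u, hu, hu'⟩ := Finset.exists_between'
    {m.1 0, t - m.2 4, t - m.2 1 - m.2 2, m.1 3 - m.2 1}
    {m.2 0, t - m.1 4, t - m.1 1 - m.1 2, m.2 3 - m.1 1}
    (by simp only [Finset.mem_insert, Finset.mem_singleton]
        rintro _ (rfl | rfl | rfl | rfl) _ (rfl | rfl | rfl | rfl) <;> linarith)
  simp only [Finset.mem_insert, Finset.mem_singleton, forall_eq_or_imp, forall_eq] at hu hu'
  obtain ⟨v, hv, hv'⟩ := Finset.exists_between'
    {m.1 1, t - u - m.2 2, m.1 3 - u} {m.2 1, t - u - m.1 2, m.2 3 - u}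
    (by simp only [Finset.mem_insert, Finset.mem_singleton]
        rintro _ (rfl | rfl | rfl) _ (rfl | rfl | rfl) <;> linarith)
  simp only [Finset.mem_insert, Finset.mem_singleton, forall_eq_or_imp, forall_eq] at hv hv'
  refine ⟨![u, v, t - u - v], mem_polySet_alpha6.2 ?_, by simp⟩
  simp only [Matrix.cons_val]
  refine ⟨⟨?_, ?_⟩, ⟨?_, ?_⟩, ⟨?_, ?_⟩, ⟨?_, ?_⟩, ⟨?_, ?_⟩, ⟨?_, ?_⟩⟩ <;> linarith

theorem image_polySet_alpha6 {m : CM 6} (hopt : m = Opt alpha6 m)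
    (hne : (PolySet alpha6 m).Nonempty) (i : Fin 6) :
    (fun x => (alpha6 *ᵥ x) i) '' PolySet alpha6 m = Ioo (m.1 i) (m.2 i) := by
  refine Subset.antisymm (image_subset_iff.2 fun x hx => hx i) ?_
  fin_cases i <;>
    simp only [mulVec_alpha6, Fin.zero_eta, Fin.mk_one, Fin.reduceFinMk, Matrix.cons_val]
  · exact Ioo_subset_image_alpha6_zero hopt hne
  · exact Ioo_subset_image_alpha6_one hopt hne
  · exact Ioo_subset_image_alpha6_two hopt hne
  · exact Ioo_subset_image_alpha6_three hopt hne
  · exact Ioo_subset_image_alpha6_four hopt hne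
  · exact Ioo_subset_image_alpha6_five hopt hne

theorem endpoints_eq_of_image_eq_Ioo {X : Type*} {P : Set X} {σ : X → X} {f g : X → ℝ}
    {a b a' b' c : ℝ} (hσ : σ '' P = P) (hfg : ∀ x, g (σ x) = c - f x)
    (hf : f '' P = Ioo a b) (hg : g '' P = Ioo a' b') (hab : a < b) :
    a' = c - b ∧ b' = c - a := by
  have hIoo : Ioo a' b' = Ioo (c - b) (c - a) := by
    rw [← hg, ← hσ, image_image, funext hfg, ← image_image (c - ·) f, hf, image_const_sub_Ioo]
  have hlt : c - b < c - a := by linarith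
  have hlt' : a' < b' := nonempty_Ioo.1 (hIoo ▸ nonempty_Ioo.2 hlt)
  obtain ⟨h₁, h₂⟩ := (Ioo_subset_Ioo_iff hlt').1 hIoo.le
  obtain ⟨h₃, h₄⟩ := (Ioo_subset_Ioo_iff hlt).1 hIoo.ge
  exact ⟨le_antisymm h₃ h₁, le_antisymm h₂ h₄⟩

theorem statement_16_general (m : CM 6) (hopt : m = Opt alpha6 m)
    (hne : (PolySet alpha6 m).Nonempty)
    (hsym : sigma4321aff '' PolySet alpha6 m = PolySet alpha6 m) :
    m.1 0 + m.2 2 = 1 ∧ m.2 0 + m.1 2 = 1 ∧ m.1 1 + m.2 1 = 1 ∧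
    m.1 3 + m.2 4 = 2 ∧ m.2 3 + m.1 4 = 2 ∧ m.1 5 + m.2 5 = 3 := by
  have hlt : ∀ i, m.1 i < m.2 i := fun i =>
    have ⟨x, hx⟩ := hne
    (hx i).1.trans (hx i).2
  have key : ∀ i j (c : ℝ), (∀ x, (alpha6 *ᵥ sigma4321aff x) j = c - (alpha6 *ᵥ x) i) →
      m.1 j = c - m.2 i ∧ m.2 j = c - m.1 i := fun i j c hσ =>
    endpoints_eq_of_image_eq_Ioo hsym hσ (image_polySet_alpha6 hopt hne i)
      (image_polySet_alpha6 hopt hne j) (hlt i)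
  obtain ⟨h₀₂, h₀₂'⟩ := key 0 2 1 fun x => by simp [mulVec_alpha6, sigma4321aff]
  obtain ⟨h₁₁, -⟩ := key 1 1 1 fun x => by simp [mulVec_alpha6, sigma4321aff]
  obtain ⟨h₃₄, h₃₄'⟩ := key 3 4 2 fun x => by simp [mulVec_alpha6, sigma4321aff]; ring
  obtain ⟨h₅₅, -⟩ := key 5 5 3 fun x => by simp [mulVec_alpha6, sigma4321aff]; ring
  refine ⟨?_, ?_, ?_, ?_, ?_, ?_⟩ <;> linarith

/-- constraints of a `σ₄₃₂₁`-symmetric optimized polytope in `(0,1)³`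
pair up as stated. -/
theorem statement_16 (m : CM 6) (hopt : m = Opt alpha6 m)
    (hne : (PolySet alpha6 m).Nonempty) (hsub : PolySet alpha6 m ⊆ cube3)
    (hsym : sigma4321aff '' PolySet alpha6 m = PolySet alpha6 m) :
    m.1 0 + m.2 2 = 1 ∧ m.2 0 + m.1 2 = 1 ∧ m.1 1 + m.2 1 = 1 ∧
    m.1 3 + m.2 4 = 2 ∧ m.2 3 + m.1 4 = 2 ∧ m.1 5 + m.2 5 = 3 :=
  statement_16_general m hopt hne hsym
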